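/- arXiv:1709.08256 — 3 statements merged into one kernel-verified Lean document; each statement's English description precedes it below -/
import Mathlib

section
/- If f, g ∈ S₁², then the pointwise product fg belongs to S₁² and ‖fg‖_{S₁²} ≤ 4 ‖f‖_{S₁²} ‖g‖_{S₁²}. -/
open Metric Filter

/-- Taylor coefficient `a_k(f) = f^{(k)}(0)/k!`. -/
noncomputable def hardyCoeff (f : ℂ → ℂ) (k : ℕ) : ℂ :=
  iteratedDeriv k f 0 / (Nat.factorial k)

/-- `f ∈ H²`: analytic on the open unit disk with square-summable Taylor coefficients. -/
def MemH2 (f : ℂ → ℂ) : Prop :=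
  AnalyticOnNhd ℂ f (ball (0 : ℂ) 1) ∧ Summable fun k => ‖hardyCoeff f k‖ ^ 2

/-- The Hardy space norm `‖f‖_{H²}`. -/
noncomputable def normH2 (f : ℂ → ℂ) : ℝ :=
  Real.sqrt (∑' k, ‖hardyCoeff f k‖ ^ 2)

/-- `f ∈ S_n²`: `f ∈ H²` and `f^{(n)} ∈ H²`. -/
def MemS (n : ℕ) (f : ℂ → ℂ) : Prop :=
  MemH2 f ∧ MemH2 (iteratedDeriv n f)

/-- The norm `‖f‖_{S_n²} = (‖f^{(n)}‖² + ‖f‖²)^{1/2}`. -/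
noncomputable def normS (n : ℕ) (f : ℂ → ℂ) : ℝ :=
  Real.sqrt (normH2 (iteratedDeriv n f) ^ 2 + normH2 f ^ 2)

/-- `f ∈ ₀S_n²`: `f ∈ S_n²` with `f^{(i)}(0) = 0` for `0 ≤ i ≤ n-1`. -/
def Mem0S (n : ℕ) (f : ℂ → ℂ) : Prop :=
  MemS n f ∧ ∀ i < n, iteratedDeriv i f 0 = 0

/-- Complex Riemann–Liouville integral `V_n`. -/
noncomputable def Vn (n : ℕ) (f : ℂ → ℂ) (z : ℂ) : ℂ :=
  z ^ n / (Nat.factorial (n - 1)) *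
    ∫ t in (0:ℝ)..1, ((1 - t : ℝ) : ℂ) ^ (n - 1) * f ((t : ℂ) * z)

/-- The operator `T_n f = z f(z) + n ∫₀^z f(w) dw`. -/
noncomputable def Tn (n : ℕ) (f : ℂ → ℂ) (z : ℂ) : ℂ :=
  z * f z + n * (z * ∫ t in (0:ℝ)..1, f ((t : ℂ) * z))

/-!
Write `aₖ`, `bₖ` for the Taylor coefficients of `f`, `g`. Cauchy–Schwarz against the weights
`1 + k²` gives `∑ |aₖ| ≤ (∑ 1/(1+k²))^{1/2} ‖f‖_{S₁²} ≤ 2 ‖f‖_{S₁²}`, because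
`∑ k² |aₖ|² = ‖f'‖²_{H²}` and `∑ 1/(1+k²) ≤ 2 ζ(2) < 4`. The coefficients of `fg` are the Cauchy
product `a ⋆ b`, those of `(fg)'` are `a' ⋆ b + a ⋆ b'`, and Young's inequality
`‖u ⋆ v‖₂ ≤ ‖u‖₂ ‖v‖₁` yields `‖fg‖² ≤ ‖f‖² ‖b‖₁²` and `‖(fg)'‖² ≤ 2 ‖f'‖² ‖b‖₁² + 2 ‖g'‖² ‖a‖₁²`.
Adding up, `‖fg‖²_{S₁²} ≤ 2 ‖f‖²_{S₁²} ‖b‖₁² + 2 ‖g‖²_{S₁²} ‖a‖₁² ≤ 16 ‖f‖²_{S₁²} ‖g‖²_{S₁²}`.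
-/

open Finset Topology

def cauchyProduct {R : Type*} [Semiring R] (u v : ℕ → R) (k : ℕ) : R :=
  ∑ p ∈ antidiagonal k, u p.1 * v p.2

lemma norm_cauchyProduct_le {R : Type*} [SeminormedRing R] (u v : ℕ → R) (k : ℕ) :
    ‖cauchyProduct u v k‖ ≤ cauchyProduct (fun j => ‖u j‖) (fun j => ‖v j‖) k :=
  (norm_sum_le _ _).trans (sum_le_sum fun _ _ => norm_mul_le _ _)

lemma cauchyProduct_nonneg {u v : ℕ → ℝ} (hu : ∀ k, 0 ≤ u k) (hv : ∀ k, 0 ≤ v k) (k : ℕ) :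
    0 ≤ cauchyProduct u v k :=
  sum_nonneg fun p _ => mul_nonneg (hu p.1) (hv p.2)

/-- Young's inequality `‖u ⋆ v‖₂ ≤ ‖u‖₂ ‖v‖₁`: Cauchy–Schwarz with weights `v` gives
`(u ⋆ v)ₖ² ≤ (u² ⋆ v)ₖ ‖v‖₁`, and `‖u² ⋆ v‖₁ = ‖u‖₂² ‖v‖₁`. -/
lemma summable_and_tsum_sq_cauchyProduct_le {u v : ℕ → ℝ} (hv : ∀ k, 0 ≤ v k)
    (hu2 : Summable fun k => u k ^ 2) (hv1 : Summable v) :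
    (Summable fun k => cauchyProduct u v k ^ 2) ∧
      ∑' k, cauchyProduct u v k ^ 2 ≤ (∑' k, u k ^ 2) * (∑' k, v k) ^ 2 := by
  set B := ∑' k, v k
  have hprod := hu2.mul_of_nonneg hv1 (fun _ => sq_nonneg _) hv
  have hd : Summable (cauchyProduct (fun k => u k ^ 2) v) :=
    summable_sum_mul_antidiagonal_of_summable_mul (f := fun k => u k ^ 2) (g := v) hprod
  have hpt : ∀ k, cauchyProduct u v k ^ 2 ≤ B * cauchyProduct (fun k => u k ^ 2) v k := by
    intro k
    have hvB : ∑ p ∈ antidiagonal k, v p.2 ≤ B := by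
      rw [← Finset.Nat.sum_antidiagonal_swap, Finset.Nat.sum_antidiagonal_eq_sum_range_succ_mk]
      exact hv1.sum_le_tsum _ fun j _ => hv j
    calc cauchyProduct u v k ^ 2
        ≤ cauchyProduct (fun k => u k ^ 2) v k * ∑ p ∈ antidiagonal k, v p.2 :=
          sum_sq_le_sum_mul_sum_of_sq_le_mul _ (r := fun p : ℕ × ℕ => u p.1 * v p.2)
            (f := fun p : ℕ × ℕ => u p.1 ^ 2 * v p.2) (fun p _ => mul_nonneg (sq_nonneg _) (hv _))
            (fun p _ => hv _) (fun p _ => le_of_eq (by ring))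
      _ ≤ cauchyProduct (fun k => u k ^ 2) v k * B :=
          mul_le_mul_of_nonneg_left hvB (cauchyProduct_nonneg (fun _ => sq_nonneg _) hv k)
      _ = B * cauchyProduct (fun k => u k ^ 2) v k := mul_comm _ _
  have hs := Summable.of_nonneg_of_le (fun _ => sq_nonneg _) hpt (hd.mul_left B)
  refine ⟨hs, (hs.tsum_le_tsum hpt (hd.mul_left B)).trans_eq ?_⟩
  rw [tsum_mul_left, show ∑' k, cauchyProduct (fun k => u k ^ 2) v k = (∑' k, u k ^ 2) * B from
    (hu2.tsum_mul_tsum_eq_tsum_sum_antidiagonal hv1 hprod).symm]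
  ring

lemma summable_and_tsum_mul_le_sqrt_mul_sqrt {ι : Type*} {u v : ι → ℝ} (hu : ∀ i, 0 ≤ u i)
    (hv : ∀ i, 0 ≤ v i) (hu2 : Summable fun i => u i ^ 2) (hv2 : Summable fun i => v i ^ 2) :
    (Summable fun i => u i * v i) ∧
      ∑' i, u i * v i ≤ √(∑' i, u i ^ 2) * √(∑' i, v i ^ 2) := by
  simpa only [Real.rpow_two, ← Real.sqrt_eq_rpow] using
    Real.summable_and_inner_le_Lp_mul_Lq_tsum_of_nonneg Real.HolderConjugate.two_two hu hv
      (by simpa only [Real.rpow_two] using hu2) (by simpa only [Real.rpow_two] using hv2)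

lemma summable_and_tsum_add_sq_le {ι : Type*} {x y : ι → ℝ} (hx : Summable fun i => x i ^ 2)
    (hy : Summable fun i => y i ^ 2) :
    (Summable fun i => (x i + y i) ^ 2) ∧
      ∑' i, (x i + y i) ^ 2 ≤ 2 * ∑' i, x i ^ 2 + 2 * ∑' i, y i ^ 2 := by
  have hpt : ∀ i, (x i + y i) ^ 2 ≤ 2 * x i ^ 2 + 2 * y i ^ 2 := fun i => by
    nlinarith [sq_nonneg (x i - y i)]
  have hbound := (hx.mul_left 2).add (hy.mul_left 2)
  have hs := Summable.of_nonneg_of_le (fun _ => sq_nonneg _) hpt hbound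
  refine ⟨hs, (hs.tsum_le_tsum hpt hbound).trans_eq ?_⟩
  rw [(hx.mul_left 2).tsum_add (hy.mul_left 2), tsum_mul_left, tsum_mul_left]

lemma summable_and_tsum_one_div_one_add_sq_le :
    (Summable fun k : ℕ => 1 / (1 + (k : ℝ) ^ 2)) ∧ ∑' k : ℕ, 1 / (1 + (k : ℝ) ^ 2) ≤ 4 := by
  have hzeta : HasSum (fun k : ℕ => 2 * (1 / ((k : ℝ) + 1) ^ 2)) (2 * (Real.pi ^ 2 / 6)) := by
    have := (hasSum_nat_add_iff' 1).mpr hasSum_zeta_two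
    simp only [range_one, sum_singleton, Nat.cast_zero, Nat.cast_add, Nat.cast_one] at this
    simpa using this.mul_left 2
  have hpt : ∀ k : ℕ, 1 / (1 + (k : ℝ) ^ 2) ≤ 2 * (1 / ((k : ℝ) + 1) ^ 2) := fun k => by
    rw [mul_one_div, div_le_div_iff₀ (by positivity) (by positivity)]
    nlinarith [sq_nonneg ((k : ℝ) - 1)]
  have hs := Summable.of_nonneg_of_le (fun _ => by positivity) hpt hzeta.summable
  refine ⟨hs, (hs.tsum_le_tsum hpt hzeta.summable).trans ?_⟩
  rw [hzeta.tsum_eq]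
  nlinarith [Real.pi_lt_d2, Real.pi_pos]

lemma hardyCoeff_deriv (f : ℂ → ℂ) (k : ℕ) :
    hardyCoeff (deriv f) k = (k + 1) * hardyCoeff f (k + 1) := by
  rw [hardyCoeff, hardyCoeff, ← iteratedDeriv_succ', Nat.factorial_succ]
  have hk : (k : ℂ) + 1 ≠ 0 := Nat.cast_add_one_ne_zero k
  push_cast
  field_simp

lemma hardyCoeff_add {f g : ℂ → ℂ} {k : ℕ} (hf : ContDiffAt ℂ k f 0) (hg : ContDiffAt ℂ k g 0) :
    hardyCoeff (fun z => f z + g z) k = hardyCoeff f k + hardyCoeff g k := by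
  rw [hardyCoeff, hardyCoeff, hardyCoeff, iteratedDeriv_fun_add hf hg, add_div]

lemma hardyCoeff_mul {f g : ℂ → ℂ} {k : ℕ} (hf : ContDiffAt ℂ k f 0) (hg : ContDiffAt ℂ k g 0) :
    hardyCoeff (fun z => f z * g z) k = cauchyProduct (hardyCoeff f) (hardyCoeff g) k := by
  rw [hardyCoeff, iteratedDeriv_fun_mul hf hg, cauchyProduct,
    Finset.Nat.sum_antidiagonal_eq_sum_range_succ (fun i j => hardyCoeff f i * hardyCoeff g j),
    sum_div]
  refine sum_congr rfl fun i hi => ?_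
  have hk : (k.factorial : ℂ) ≠ 0 := Nat.cast_ne_zero.mpr k.factorial_ne_zero
  rw [hardyCoeff, hardyCoeff, Nat.cast_choose ℂ (Nat.lt_succ_iff.mp (mem_range.mp hi))]
  field_simp

lemma hardyCoeff_deriv_mul {f g : ℂ → ℂ} (hf : AnalyticAt ℂ f 0) (hg : AnalyticAt ℂ g 0) (k : ℕ) :
    hardyCoeff (deriv fun z => f z * g z) k =
      hardyCoeff (fun z => deriv f z * g z) k + hardyCoeff (fun z => f z * deriv g z) k := by
  have hderiv : (deriv fun z => f z * g z) =ᶠ[𝓝 0] fun z => deriv f z * g z + f z * deriv g z := by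
    filter_upwards [hf.eventually_analyticAt, hg.eventually_analyticAt] with z hfz hgz
    exact deriv_fun_mul hfz.differentiableAt hgz.differentiableAt
  rw [hardyCoeff, hderiv.iteratedDeriv_eq, ← hardyCoeff,
    hardyCoeff_add (hf.deriv.fun_mul hg).contDiffAt (hf.fun_mul hg.deriv).contDiffAt]

lemma normH2_sq (f : ℂ → ℂ) : normH2 f ^ 2 = ∑' k, ‖hardyCoeff f k‖ ^ 2 :=
  Real.sq_sqrt (tsum_nonneg fun _ => sq_nonneg _)

lemma normS_one_sq (f : ℂ → ℂ) : normS 1 f ^ 2 = normH2 (deriv f) ^ 2 + normH2 f ^ 2 := by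
  rw [normS, iteratedDeriv_one, Real.sq_sqrt (by positivity)]

lemma memH2_and_normH2_sq_le_of_norm_le {h : ℂ → ℂ} {w : ℕ → ℝ}
    (ha : AnalyticOnNhd ℂ h (ball 0 1)) (hw : Summable fun k => w k ^ 2)
    (hle : ∀ k, ‖hardyCoeff h k‖ ≤ w k) :
    MemH2 h ∧ normH2 h ^ 2 ≤ ∑' k, w k ^ 2 := by
  have hpt : ∀ k, ‖hardyCoeff h k‖ ^ 2 ≤ w k ^ 2 := fun k =>
    pow_le_pow_left₀ (norm_nonneg _) (hle k) 2
  have hs := Summable.of_nonneg_of_le (fun _ => sq_nonneg _) hpt hw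
  exact ⟨⟨ha, hs⟩, (normH2_sq h).trans_le (hs.tsum_le_tsum hpt hw)⟩

lemma memH2_mul_and_normH2_sq_le {f g : ℂ → ℂ} (hf : MemH2 f)
    (hg : AnalyticOnNhd ℂ g (ball 0 1)) (hg1 : Summable fun k => ‖hardyCoeff g k‖) :
    MemH2 (fun z => f z * g z) ∧
      normH2 (fun z => f z * g z) ^ 2 ≤ normH2 f ^ 2 * (∑' k, ‖hardyCoeff g k‖) ^ 2 := by
  have h0 : (0 : ℂ) ∈ ball (0 : ℂ) 1 := mem_ball_self one_pos
  obtain ⟨hs, hle⟩ := summable_and_tsum_sq_cauchyProduct_le (fun _ => norm_nonneg _) hf.2 hg1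
  obtain ⟨hmem, hnorm⟩ := memH2_and_normH2_sq_le_of_norm_le (hf.1.mul hg) hs fun k => by
    rw [hardyCoeff_mul (hf.1 0 h0).contDiffAt (hg 0 h0).contDiffAt]
    exact norm_cauchyProduct_le _ _ k
  exact ⟨hmem, hnorm.trans (normH2_sq f ▸ hle)⟩

lemma memH2_deriv_mul_and_normH2_sq_le {f g : ℂ → ℂ} (hf : AnalyticOnNhd ℂ f (ball 0 1))
    (hg : AnalyticOnNhd ℂ g (ball 0 1)) (hf' : MemH2 (deriv f)) (hg' : MemH2 (deriv g))
    (hf1 : Summable fun k => ‖hardyCoeff f k‖) (hg1 : Summable fun k => ‖hardyCoeff g k‖) :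
    MemH2 (deriv fun z => f z * g z) ∧
      normH2 (deriv fun z => f z * g z) ^ 2 ≤
        2 * normH2 (deriv f) ^ 2 * (∑' k, ‖hardyCoeff g k‖) ^ 2 +
          2 * normH2 (deriv g) ^ 2 * (∑' k, ‖hardyCoeff f k‖) ^ 2 := by
  have h0 : (0 : ℂ) ∈ ball (0 : ℂ) 1 := mem_ball_self one_pos
  obtain ⟨hf'g, hf'g_le⟩ := memH2_mul_and_normH2_sq_le hf' hg hg1
  obtain ⟨hg'f, hg'f_le⟩ := memH2_mul_and_normH2_sq_le hg' hf hf1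
  simp only [mul_comm (deriv g _)] at hg'f hg'f_le
  obtain ⟨hs, hle⟩ := summable_and_tsum_add_sq_le hf'g.2 hg'f.2
  obtain ⟨hmem, hnorm⟩ := memH2_and_normH2_sq_le_of_norm_le (hf.mul hg).deriv hs fun k => by
    rw [hardyCoeff_deriv_mul (hf 0 h0) (hg 0 h0)]
    exact norm_add_le _ _
  refine ⟨hmem, hnorm.trans ?_⟩
  rw [← normH2_sq, ← normH2_sq] at hle
  linarith

lemma hasSum_norm_hardyCoeff_deriv_sq_iff {f : ℂ → ℂ} {s : ℝ} :
    HasSum (fun k => ‖hardyCoeff (deriv f) k‖ ^ 2) s ↔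
      HasSum (fun k : ℕ => (k : ℝ) ^ 2 * ‖hardyCoeff f k‖ ^ 2) s := by
  conv_rhs => rw [← hasSum_nat_add_iff' 1]
  simp only [range_one, sum_singleton, Nat.cast_zero, zero_pow two_ne_zero, zero_mul, sub_zero,
    hardyCoeff_deriv, norm_mul, mul_pow]
  norm_cast

lemma summable_and_tsum_norm_hardyCoeff_le {f : ℂ → ℂ}
    (hf : Summable fun k => ‖hardyCoeff f k‖ ^ 2)
    (hf' : Summable fun k => ‖hardyCoeff (deriv f) k‖ ^ 2) :
    (Summable fun k => ‖hardyCoeff f k‖) ∧ ∑' k, ‖hardyCoeff f k‖ ≤ 2 * normS 1 f := by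
  obtain ⟨hS, hS_le⟩ := summable_and_tsum_one_div_one_add_sq_le
  set ρ : ℕ → ℝ := fun k => √(1 + (k : ℝ) ^ 2)
  have hρ : ∀ k, 0 < ρ k := fun k => Real.sqrt_pos.mpr (by positivity)
  have hρ2 : ∀ k, ρ k ^ 2 = 1 + (k : ℝ) ^ 2 := fun k => Real.sq_sqrt (by positivity)
  have hu : (fun k => (ρ k)⁻¹ ^ 2) = fun k : ℕ => 1 / (1 + (k : ℝ) ^ 2) := by
    funext k
    rw [inv_pow, hρ2, one_div]
  have hw : HasSum (fun k => (ρ k * ‖hardyCoeff f k‖) ^ 2) (normS 1 f ^ 2) := by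
    rw [normS_one_sq, normH2_sq, normH2_sq, add_comm]
    convert hf.hasSum.add (hasSum_norm_hardyCoeff_deriv_sq_iff.mp hf'.hasSum) using 1
    funext k
    rw [mul_pow, hρ2]
    ring
  obtain ⟨hs, hle⟩ := summable_and_tsum_mul_le_sqrt_mul_sqrt (u := fun k => (ρ k)⁻¹)
    (fun k => (inv_pos.mpr (hρ k)).le) (fun k => mul_nonneg (hρ k).le (norm_nonneg _))
    (hu ▸ hS) hw.summable
  have hcancel : ∀ k, (ρ k)⁻¹ * (ρ k * ‖hardyCoeff f k‖) = ‖hardyCoeff f k‖ := fun k =>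
    inv_mul_cancel_left₀ (hρ k).ne' _
  have hF : 0 ≤ normS 1 f := Real.sqrt_nonneg _
  simp only [hcancel, hu, hw.tsum_eq, Real.sqrt_sq hF] at hs hle
  refine ⟨hs, hle.trans (mul_le_mul_of_nonneg_right ?_ hF)⟩
  exact Real.sqrt_le_iff.mpr ⟨by norm_num, by linarith⟩

/-- If `f, g ∈ S₁²`, then `fg ∈ S₁²` and `‖fg‖_{S₁²} ≤ 4‖f‖_{S₁²}‖g‖_{S₁²}`. -/
theorem stmt2 (f g : ℂ → ℂ) (hf : MemS 1 f) (hg : MemS 1 g) :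
    MemS 1 (fun z => f z * g z) ∧
    normS 1 (fun z => f z * g z) ≤ 4 * normS 1 f * normS 1 g := by
  obtain ⟨hf0, hf1⟩ := hf
  obtain ⟨hg0, hg1⟩ := hg
  rw [iteratedDeriv_one] at hf1 hg1
  obtain ⟨hα, hα_le⟩ := summable_and_tsum_norm_hardyCoeff_le hf0.2 hf1.2
  obtain ⟨hβ, hβ_le⟩ := summable_and_tsum_norm_hardyCoeff_le hg0.2 hg1.2
  obtain ⟨hfg, hfg_le⟩ := memH2_mul_and_normH2_sq_le hf0 hg0.1 hβ
  obtain ⟨hd, hd_le⟩ := memH2_deriv_mul_and_normH2_sq_le hf0.1 hg0.1 hf1 hg1 hα hβ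
  refine ⟨⟨hfg, by rwa [iteratedDeriv_one]⟩, ?_⟩
  set α := ∑' k, ‖hardyCoeff f k‖
  set β := ∑' k, ‖hardyCoeff g k‖
  have hsq : normS 1 (fun z => f z * g z) ^ 2 ≤ (4 * normS 1 f * normS 1 g) ^ 2 :=
    calc normS 1 (fun z => f z * g z) ^ 2
        ≤ 2 * (normH2 (deriv f) ^ 2 + normH2 f ^ 2) * β ^ 2 + 2 * normH2 (deriv g) ^ 2 * α ^ 2 := by
          rw [normS_one_sq]
          nlinarith [sq_nonneg (normH2 f), sq_nonneg β]
      _ ≤ 2 * normS 1 f ^ 2 * (2 * normS 1 g) ^ 2 + 2 * normS 1 g ^ 2 * (2 * normS 1 f) ^ 2 := by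
          rw [← normS_one_sq, normS_one_sq g]
          gcongr
          linarith [sq_nonneg (normH2 g)]
      _ = (4 * normS 1 f * normS 1 g) ^ 2 := by ring
  exact le_of_pow_le_pow_left₀ two_ne_zero
    (mul_nonneg (mul_nonneg zero_le_four (Real.sqrt_nonneg _)) (Real.sqrt_nonneg _)) hsq
end

section
/- For every integer n ≥ 1 there exists a constant C > 0 such that for all f, g ∈ S_n², the pointwise product fg belongs to S_n² and ‖fg‖_{S_n²} ≤ C ‖f‖_{S_n²} ‖g‖_{S_n²} (so S_n² is a Banach algebra under an equivalent norm). -/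
open Metric Filter

namespace Stmt3Aux

open Finset

noncomputable def wt (n k : ℕ) : ℝ := 1 + (k.descFactorial n : ℝ)^2

lemma wt_nonneg (n k : ℕ) : 0 ≤ wt n k := by unfold wt; positivity

lemma one_le_wt (n k : ℕ) : 1 ≤ wt n k := by
  unfold wt; nlinarith [sq_nonneg ((k.descFactorial n : ℝ))]

lemma wt_pos (n k : ℕ) : 0 < wt n k := lt_of_lt_of_le one_pos (one_le_wt n k)

lemma iteratedDeriv_add' (k m : ℕ) (f : ℂ → ℂ) :
    iteratedDeriv (k + m) f = iteratedDeriv k (iteratedDeriv m f) := by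
  induction k with
  | zero => simp [iteratedDeriv_zero]
  | succ k ih =>
    rw [show k + 1 + m = (k + m) + 1 by ring, iteratedDeriv_succ, ih, ← iteratedDeriv_succ]

lemma hardyCoeff_iteratedDeriv (f : ℂ → ℂ) (m k : ℕ) :
    hardyCoeff (iteratedDeriv m f) k = ((k+m).descFactorial m : ℂ) * hardyCoeff f (k+m) := by
  have hfact : ((k+m).factorial : ℂ) = ((k+m).descFactorial m : ℂ) * (k.factorial : ℂ) := by
    have := Nat.factorial_mul_descFactorial (Nat.le_add_left m k)
    rw [Nat.add_sub_cancel] at this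
    exact_mod_cast (by rw [← this]; ring)
  unfold hardyCoeff
  rw [← iteratedDeriv_add', hfact]
  have h1 : (k.factorial : ℂ) ≠ 0 := by exact_mod_cast k.factorial_ne_zero
  have h2 : ((k+m).descFactorial m : ℂ) ≠ 0 := by
    have : (k+m).descFactorial m ≠ 0 := by
      simp [Nat.descFactorial_eq_zero_iff_lt]
    exact_mod_cast this
  field_simp


lemma analyticOnNhd_iteratedDeriv {f : ℂ → ℂ} (hf : AnalyticOnNhd ℂ f (ball (0:ℂ) 1)) (m : ℕ) :
    AnalyticOnNhd ℂ (iteratedDeriv m f) (ball (0:ℂ) 1) := by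
  induction m with
  | zero => simpa using hf
  | succ m ih => rw [iteratedDeriv_succ]; exact ih.deriv

lemma hasSum_hardyCoeff {f : ℂ → ℂ} (hf : AnalyticOnNhd ℂ f (ball (0:ℂ) 1)) {z : ℂ}
    (hz : z ∈ ball (0:ℂ) 1) :
    HasSum (fun k => hardyCoeff f k * z ^ k) (f z) := by
  have := Complex.hasSum_taylorSeries_on_ball (hf.differentiableOn) hz
  refine this.congr_fun fun k => ?_
  simp only [hardyCoeff, smul_eq_mul, sub_zero]
  field_simp

lemma ofScalars_coeff (c : ℕ → ℂ) (k : ℕ) :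
    (FormalMultilinearSeries.ofScalars ℂ c).coeff k = c k := by
  simp [FormalMultilinearSeries.coeff, FormalMultilinearSeries.ofScalars, List.prod_ofFn]

lemma hasFPowerSeriesAt_ofScalars {h : ℂ → ℂ} (c : ℕ → ℂ)
    (hsum : ∀ z ∈ ball (0:ℂ) 1, HasSum (fun k => c k * z ^ k) (h z)) :
    HasFPowerSeriesAt h (FormalMultilinearSeries.ofScalars ℂ c) 0 := by
  rw [hasFPowerSeriesAt_iff]
  filter_upwards [ball_mem_nhds (0:ℂ) one_pos] with z hz
  simpa only [ofScalars_coeff, smul_eq_mul, zero_add, mul_comm] using hsum z hz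

lemma hardyCoeff_eq_of_hasSum {h : ℂ → ℂ} (hh : AnalyticOnNhd ℂ h (ball (0:ℂ) 1)) (c : ℕ → ℂ)
    (hsum : ∀ z ∈ ball (0:ℂ) 1, HasSum (fun k => c k * z ^ k) (h z)) (k : ℕ) :
    hardyCoeff h k = c k := by
  have hp := hasFPowerSeriesAt_ofScalars c hsum
  have hq := hasFPowerSeriesAt_ofScalars (hardyCoeff h) (fun z hz => hasSum_hardyCoeff hh hz)
  have := hq.eq_formalMultilinearSeries hp
  have := congrArg (fun p => FormalMultilinearSeries.coeff p k) this
  simpa only [ofScalars_coeff] using this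

lemma summable_norm_coeff_mul_pow {f : ℂ → ℂ} (hf : Summable fun k => ‖hardyCoeff f k‖ ^ 2)
    {z : ℂ} (hz : ‖z‖ < 1) :
    Summable fun k => ‖hardyCoeff f k * z ^ k‖ := by
  have hz0 : 0 ≤ ‖z‖ := norm_nonneg z
  have hgeo : Summable fun k : ℕ => ‖z‖ ^ k := summable_geometric_of_lt_one hz0 hz
  have h1 : Summable fun k => ‖hardyCoeff f k‖ ^ 2 * ‖z‖ ^ k := by
    apply Summable.of_nonneg_of_le (fun k => by positivity) (fun k => ?_) hf
    have : ‖z‖ ^ k ≤ 1 := pow_le_one₀ hz0 hz.le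
    nlinarith [sq_nonneg ‖hardyCoeff f k‖]
  apply Summable.of_nonneg_of_le (fun k => norm_nonneg _) (fun k => ?_) (h1.add hgeo)
  rw [norm_mul, norm_pow]
  nlinarith [sq_nonneg (‖hardyCoeff f k‖ - 1), pow_nonneg hz0 k, norm_nonneg (hardyCoeff f k)]

lemma hardyCoeff_mul {f g : ℂ → ℂ} (hf : MemH2 f) (hg : MemH2 g) (k : ℕ) :
    hardyCoeff (fun z => f z * g z) k
      = ∑ i ∈ Finset.range (k+1), hardyCoeff f i * hardyCoeff g (k-i) := by
  refine hardyCoeff_eq_of_hasSum (hf.1.mul hg.1)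
    (fun k => ∑ i ∈ Finset.range (k+1), hardyCoeff f i * hardyCoeff g (k-i)) (fun z hz => ?_) k
  have hz1 : ‖z‖ < 1 := by simpa [mem_ball, dist_eq_norm] using hz
  have hF : Summable fun k => ‖hardyCoeff f k * z ^ k‖ := summable_norm_coeff_mul_pow hf.2 hz1
  have hG : Summable fun k => ‖hardyCoeff g k * z ^ k‖ := summable_norm_coeff_mul_pow hg.2 hz1
  have hsum : Summable fun k =>
      ∑ i ∈ Finset.range (k+1), (hardyCoeff f i * z ^ i) * (hardyCoeff g (k-i) * z ^ (k-i)) :=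
    (summable_norm_sum_mul_range_of_summable_norm hF hG).of_norm
  have htsum := tsum_mul_tsum_eq_tsum_sum_range_of_summable_norm hF hG
  have hfz := (hasSum_hardyCoeff hf.1 hz)
  have hgz := (hasSum_hardyCoeff hg.1 hz)
  rw [hfz.tsum_eq, hgz.tsum_eq] at htsum
  have hkey : ∀ k : ℕ, ∑ i ∈ Finset.range (k+1), (hardyCoeff f i * z ^ i) * (hardyCoeff g (k-i) * z ^ (k-i))
      = (∑ i ∈ Finset.range (k+1), hardyCoeff f i * hardyCoeff g (k-i)) * z ^ k := by
    intro k
    rw [Finset.sum_mul]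
    refine Finset.sum_congr rfl fun i hi => ?_
    have hik : i ≤ k := Nat.lt_succ_iff.mp (Finset.mem_range.mp hi)
    rw [show hardyCoeff f i * z ^ i * (hardyCoeff g (k - i) * z ^ (k - i))
        = hardyCoeff f i * hardyCoeff g (k - i) * (z ^ i * z ^ (k-i)) by ring,
      ← pow_add, Nat.add_sub_cancel' hik]
  simp_rw [hkey] at hsum htsum
  exact htsum ▸ hsum.hasSum

lemma cs_fin (s : Finset ℕ) (x y : ℕ → ℝ) (hx : ∀ k, 0 ≤ x k) (hy : ∀ k, 0 ≤ y k) :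
    ∑ i ∈ s, x i * y i ≤ Real.sqrt (∑ i ∈ s, x i ^ 2) * Real.sqrt (∑ i ∈ s, y i ^ 2) := by
  have h := Finset.sum_mul_sq_le_sq_mul_sq s x y
  have hnn : 0 ≤ ∑ i ∈ s, x i * y i := Finset.sum_nonneg fun i _ => mul_nonneg (hx i) (hy i)
  have := Real.sqrt_le_sqrt h
  rw [Real.sqrt_mul (Finset.sum_nonneg fun i _ => sq_nonneg _)] at this
  calc ∑ i ∈ s, x i * y i = Real.sqrt ((∑ i ∈ s, x i * y i) ^ 2) := (Real.sqrt_sq hnn).symm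
    _ ≤ _ := this

lemma cs_tsum {x y : ℕ → ℝ} (hx : ∀ k, 0 ≤ x k) (hy : ∀ k, 0 ≤ y k)
    (hx2 : Summable fun k => x k ^ 2) (hy2 : Summable fun k => y k ^ 2) :
    Summable (fun k => x k * y k) ∧
      ∑' k, x k * y k ≤ Real.sqrt (∑' k, x k ^ 2) * Real.sqrt (∑' k, y k ^ 2) := by
  have hsum : Summable fun k => x k * y k := by
    apply Summable.of_nonneg_of_le (fun k => mul_nonneg (hx k) (hy k)) (fun k => ?_)
      ((hx2.add hy2).mul_left (1/2:ℝ))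
    nlinarith [sq_nonneg (x k - y k)]
  refine ⟨hsum, Summable.tsum_le_of_sum_le hsum fun s => ?_⟩
  calc ∑ i ∈ s, x i * y i ≤ Real.sqrt (∑ i ∈ s, x i ^ 2) * Real.sqrt (∑ i ∈ s, y i ^ 2) :=
        cs_fin s x y hx hy
    _ ≤ _ := by
        have h1 := Summable.sum_le_tsum s (fun i _ => sq_nonneg (x i)) hx2
        have h2 := Summable.sum_le_tsum s (fun i _ => sq_nonneg (y i)) hy2
        exact mul_le_mul (Real.sqrt_le_sqrt h1) (Real.sqrt_le_sqrt h2)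
          (Real.sqrt_nonneg _) (Real.sqrt_nonneg _)

lemma young_l1_l2 {u v : ℕ → ℝ} (hu : ∀ k, 0 ≤ u k) (hv : ∀ k, 0 ≤ v k)
    (hsu : Summable u) (hsv : Summable fun k => v k ^ 2) :
    Summable (fun k => (∑ i ∈ Finset.range (k+1), u i * v (k-i)) ^ 2) ∧
      ∑' k, (∑ i ∈ Finset.range (k+1), u i * v (k-i)) ^ 2 ≤ (∑' k, u k)^2 * ∑' k, v k ^ 2 := by
  set U := ∑' k, u k with hU
  have hU0 : 0 ≤ U := tsum_nonneg hu
  set t : ℕ → ℝ := fun k => ∑ i ∈ Finset.range (k+1), u i * v (k-i) ^ 2 with ht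
  -- t is summable with sum U * V₂ (Cauchy product)
  have hnu : Summable fun k => ‖u k‖ := by simpa [Real.norm_of_nonneg (hu _)] using hsu
  have hnv : Summable fun k => ‖v k ^ 2‖ := by
    simpa [Real.norm_of_nonneg (sq_nonneg (v _))] using hsv
  have hts : Summable t := (summable_norm_sum_mul_range_of_summable_norm hnu hnv).of_norm
  have htsum : ∑' k, t k = U * ∑' k, v k ^ 2 :=
    (tsum_mul_tsum_eq_tsum_sum_range_of_summable_norm hnu hnv).symm
  -- pointwise Cauchy–Schwarz
  have hpt : ∀ k, (∑ i ∈ Finset.range (k+1), u i * v (k-i)) ^ 2 ≤ U * t k := by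
    intro k
    have hcs := Finset.sum_mul_sq_le_sq_mul_sq (Finset.range (k+1))
      (fun i => Real.sqrt (u i)) (fun i => Real.sqrt (u i) * v (k-i))
    have he : ∀ i, Real.sqrt (u i) * (Real.sqrt (u i) * v (k-i)) = u i * v (k-i) := by
      intro i; rw [← mul_assoc, Real.mul_self_sqrt (hu i)]
    have he2 : ∀ i, Real.sqrt (u i) ^ 2 = u i := fun i => Real.sq_sqrt (hu i)
    have he3 : ∀ i, (Real.sqrt (u i) * v (k-i)) ^ 2 = u i * v (k-i) ^ 2 := by
      intro i; rw [mul_pow, he2]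
    simp only [he, he2, he3] at hcs
    calc (∑ i ∈ Finset.range (k+1), u i * v (k-i)) ^ 2
        ≤ (∑ i ∈ Finset.range (k+1), u i) * ∑ i ∈ Finset.range (k+1), u i * v (k-i) ^ 2 := hcs
      _ ≤ U * t k := by
          apply mul_le_mul_of_nonneg_right (Summable.sum_le_tsum _ (fun i _ => hu i) hsu)
          exact Finset.sum_nonneg fun i _ => mul_nonneg (hu i) (sq_nonneg _)
  have hs2 : Summable fun k => (∑ i ∈ Finset.range (k+1), u i * v (k-i)) ^ 2 :=
    Summable.of_nonneg_of_le (fun k => sq_nonneg _) hpt (hts.mul_left U)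
  refine ⟨hs2, ?_⟩
  calc ∑' k, (∑ i ∈ Finset.range (k+1), u i * v (k-i)) ^ 2
      ≤ ∑' k, U * t k := Summable.tsum_le_tsum hpt hs2 (hts.mul_left U)
    _ = U * (U * ∑' k, v k ^ 2) := by rw [tsum_mul_left, htsum]
    _ = U^2 * ∑' k, v k ^ 2 := by ring

lemma sqrt_wt_le (n k : ℕ) : Real.sqrt (wt n k) ≤ 1 + (k.descFactorial n : ℝ) := by
  have hd : (0:ℝ) ≤ (k.descFactorial n : ℝ) := Nat.cast_nonneg _
  have : wt n k ≤ (1 + (k.descFactorial n : ℝ))^2 := by unfold wt; nlinarith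
  calc Real.sqrt (wt n k) ≤ Real.sqrt ((1 + (k.descFactorial n : ℝ))^2) := Real.sqrt_le_sqrt this
    _ = _ := Real.sqrt_sq (by linarith)

lemma le_sqrt_wt (n k : ℕ) : 1 + (k.descFactorial n : ℝ) ≤ 2 * Real.sqrt (wt n k) := by
  have hd : (0:ℝ) ≤ (k.descFactorial n : ℝ) := Nat.cast_nonneg _
  have h4 : (1 + (k.descFactorial n : ℝ))^2 ≤ 4 * wt n k := by unfold wt; nlinarith
  calc 1 + (k.descFactorial n : ℝ) = Real.sqrt ((1 + (k.descFactorial n : ℝ))^2) :=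
        (Real.sqrt_sq (by linarith)).symm
    _ ≤ Real.sqrt (4 * wt n k) := Real.sqrt_le_sqrt h4
    _ = 2 * Real.sqrt (wt n k) := by
        rw [show (4:ℝ) = 2^2 by norm_num, Real.sqrt_mul (by positivity), Real.sqrt_sq two_pos.le]

lemma pow_le_const_mul (n : ℕ) (hn : 1 ≤ n) (i : ℕ) :
    (i:ℝ)^n ≤ (2*(n:ℝ))^n * (1 + (i.descFactorial n : ℝ)) := by
  have hd : (0:ℝ) ≤ (i.descFactorial n : ℝ) := Nat.cast_nonneg _
  rcases le_or_gt i (2*n) with h | h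
  · have h1 : (i:ℝ)^n ≤ (2*(n:ℝ))^n := by
      apply pow_le_pow_left₀ (Nat.cast_nonneg i)
      exact_mod_cast h
    nlinarith [pow_nonneg (by positivity : (0:ℝ) ≤ 2*(n:ℝ)) n]
  · have hnat : (i + 1 - n)^n ≤ i.descFactorial n := Nat.pow_sub_le_descFactorial i n
    have hle : i ≤ 2 * (i + 1 - n) := by omega
    have h2 : (i:ℝ) ≤ 2 * ((i + 1 - n : ℕ) : ℝ) := by
      exact_mod_cast hle
    have h3 : (i:ℝ)^n ≤ (2 * ((i + 1 - n : ℕ) : ℝ))^n :=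
      pow_le_pow_left₀ (Nat.cast_nonneg i) h2 n
    have h4 : ((i + 1 - n : ℕ) : ℝ)^n ≤ (i.descFactorial n : ℝ) := by
      exact_mod_cast hnat
    have h5 : (2:ℝ)^n ≤ (2*(n:ℝ))^n := by
      apply pow_le_pow_left₀ (by norm_num)
      have : (1:ℝ) ≤ (n:ℝ) := by exact_mod_cast hn
      nlinarith
    have h6 : (1:ℝ) ≤ (2:ℝ)^n := one_le_pow₀ (by norm_num)
    calc (i:ℝ)^n ≤ (2 * ((i + 1 - n : ℕ) : ℝ))^n := h3
      _ = 2^n * ((i + 1 - n : ℕ) : ℝ)^n := by rw [mul_pow]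
      _ ≤ 2^n * (i.descFactorial n : ℝ) := by
          exact mul_le_mul_of_nonneg_left h4 (by positivity)
      _ ≤ (2*(n:ℝ))^n * (1 + (i.descFactorial n : ℝ)) := by nlinarith

lemma sqrt_wt_add_le (n : ℕ) (hn : 1 ≤ n) (i j : ℕ) :
    Real.sqrt (wt n (i+j)) ≤ (2 * (1 + 2^n * (2*(n:ℝ))^n)) *
      (Real.sqrt (wt n i) + Real.sqrt (wt n j)) := by
  set A := (2:ℝ)^n with hA
  set B := (2*(n:ℝ))^n with hB
  have hA1 : (1:ℝ) ≤ A := one_le_pow₀ (by norm_num)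
  have hB1 : (1:ℝ) ≤ B := one_le_pow₀ (by push_cast; exact_mod_cast by omega : (1:ℝ) ≤ 2*(n:ℝ))
  have h1 : ((i+j:ℕ).descFactorial n : ℝ) ≤ ((i+j:ℕ):ℝ)^n := by
    exact_mod_cast Nat.descFactorial_le_pow (i+j) n
  have h2 : ((i+j:ℕ):ℝ)^n ≤ A * ((i:ℝ)^n + (j:ℝ)^n) := by
    rcases le_total i j with h | h
    · have : ((i+j:ℕ):ℝ) ≤ 2*(j:ℝ) := by push_cast; exact_mod_cast by omega
      calc ((i+j:ℕ):ℝ)^n ≤ (2*(j:ℝ))^n := pow_le_pow_left₀ (Nat.cast_nonneg _) this n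
        _ = A * (j:ℝ)^n := by rw [hA, mul_pow]
        _ ≤ A * ((i:ℝ)^n + (j:ℝ)^n) := by nlinarith [pow_nonneg (Nat.cast_nonneg i : (0:ℝ) ≤ i) n]
    · have : ((i+j:ℕ):ℝ) ≤ 2*(i:ℝ) := by push_cast; exact_mod_cast by omega
      calc ((i+j:ℕ):ℝ)^n ≤ (2*(i:ℝ))^n := pow_le_pow_left₀ (Nat.cast_nonneg _) this n
        _ = A * (i:ℝ)^n := by rw [hA, mul_pow]
        _ ≤ A * ((i:ℝ)^n + (j:ℝ)^n) := by nlinarith [pow_nonneg (Nat.cast_nonneg j : (0:ℝ) ≤ j) n]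
  have h3 := pow_le_const_mul n hn i
  have h4 := pow_le_const_mul n hn j
  have h5 := sqrt_wt_le n (i+j)
  have h6 := le_sqrt_wt n i
  have h7 := le_sqrt_wt n j
  have hdi : (0:ℝ) ≤ (i.descFactorial n : ℝ) := Nat.cast_nonneg _
  have hdj : (0:ℝ) ≤ (j.descFactorial n : ℝ) := Nat.cast_nonneg _
  have hsi : 0 ≤ Real.sqrt (wt n i) := Real.sqrt_nonneg _
  have hsj : 0 ≤ Real.sqrt (wt n j) := Real.sqrt_nonneg _
  nlinarith [mul_le_mul_of_nonneg_left h3 (by positivity : (0:ℝ) ≤ A),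
    mul_le_mul_of_nonneg_left h4 (by positivity : (0:ℝ) ≤ A),
    mul_nonneg (mul_nonneg (by positivity : (0:ℝ) ≤ A) (by positivity : (0:ℝ) ≤ B)) hdi]

lemma summable_inv_wt (n : ℕ) (hn : 1 ≤ n) : Summable fun k => (wt n k)⁻¹ := by
  rw [← summable_nat_add_iff (2*n)]
  have hbase : Summable fun k : ℕ => (((k:ℝ)+1)^2)⁻¹ := by
    have h := (Real.summable_nat_pow_inv (p := 2)).mpr one_lt_two
    have := (summable_nat_add_iff 1).mpr h
    refine this.congr fun k => ?_
    push_cast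
    ring
  apply Summable.of_nonneg_of_le (fun k => inv_nonneg.mpr (wt_nonneg n _)) (fun k => ?_) hbase
  have hd : (k + 2*n + 1 - n)^n ≤ (k + 2*n).descFactorial n := Nat.pow_sub_le_descFactorial _ n
  have he : k + 2*n + 1 - n = k + n + 1 := by omega
  rw [he] at hd
  have h1 : k + 1 ≤ (k + n + 1)^n := by
    calc k + 1 ≤ (k + n + 1)^1 := by rw [pow_one]; omega
      _ ≤ (k + n + 1)^n := Nat.pow_le_pow_right (by omega) hn
  have h2 : (k + 1 : ℝ) ≤ ((k + 2*n).descFactorial n : ℝ) := by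
    exact_mod_cast le_trans h1 hd
  have h3 : ((k:ℝ)+1)^2 ≤ wt n (k + 2*n) := by
    unfold wt
    nlinarith [(Nat.cast_nonneg k : (0:ℝ) ≤ (k:ℝ))]
  apply inv_anti₀ (by positivity) h3

noncomputable def dco (n : ℕ) (f : ℂ → ℂ) (k : ℕ) : ℝ :=
  (k.descFactorial n : ℝ)^2 * ‖hardyCoeff f k‖^2

lemma norm_hc_deriv_sq (n : ℕ) (f : ℂ → ℂ) (k : ℕ) :
    ‖hardyCoeff (iteratedDeriv n f) k‖^2 = dco n f (k + n) := by
  rw [hardyCoeff_iteratedDeriv, norm_mul, mul_pow, dco, Complex.norm_natCast]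

lemma dco_zero {n : ℕ} (f : ℂ → ℂ) {x : ℕ} (hx : x ∉ Set.range (fun k => k + n)) :
    dco n f x = 0 := by
  have hxn : x < n := by
    by_contra h
    exact hx ⟨x - n, show x - n + n = x by omega⟩
  rw [dco, Nat.descFactorial_eq_zero_iff_lt.mpr hxn]
  norm_num

lemma add_inj (n : ℕ) : Function.Injective (fun k : ℕ => k + n) := fun a b h => by
  simpa using h

lemma dco_support {n : ℕ} (f : ℂ → ℂ) :
    Function.support (dco n f) ⊆ Set.range (fun k => k + n) := by
  intro x hx
  by_contra h
  exact hx (dco_zero f h)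

lemma summable_dco {n : ℕ} {f : ℂ → ℂ} (hf : Summable fun k => ‖hardyCoeff (iteratedDeriv n f) k‖^2) :
    Summable (dco n f) := by
  have : Summable ((dco n f) ∘ (fun k => k + n)) := by
    refine hf.congr fun k => norm_hc_deriv_sq n f k
  exact ((add_inj n).summable_iff (fun x hx => dco_zero f hx)).mp this

lemma tsum_dco {n : ℕ} {f : ℂ → ℂ} :
    ∑' k, ‖hardyCoeff (iteratedDeriv n f) k‖^2 = ∑' k, dco n f k := by
  rw [show (fun k => ‖hardyCoeff (iteratedDeriv n f) k‖^2) = fun k => dco n f (k + n) by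
    funext k; exact norm_hc_deriv_sq n f k]
  exact (add_inj n).tsum_eq (dco_support f)

lemma wt_split (n : ℕ) (f : ℂ → ℂ) (k : ℕ) :
    wt n k * ‖hardyCoeff f k‖^2 = ‖hardyCoeff f k‖^2 + dco n f k := by
  rw [wt, dco]; ring

lemma summable_wt_of_memS {n : ℕ} {f : ℂ → ℂ} (hf : MemS n f) :
    Summable (fun k => wt n k * ‖hardyCoeff f k‖^2) := by
  have h1 := hf.1.2
  have h2 := summable_dco hf.2.2
  refine (h1.add h2).congr fun k => (wt_split n f k).symm

lemma normS_sq_eq {n : ℕ} {f : ℂ → ℂ} (hf : MemS n f) :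
    normS n f ^ 2 = ∑' k, wt n k * ‖hardyCoeff f k‖^2 := by
  have h1 := hf.1.2
  have h2 := summable_dco hf.2.2
  rw [normS, Real.sq_sqrt (by positivity), normH2, normH2,
    Real.sq_sqrt (tsum_nonneg fun k => sq_nonneg _),
    Real.sq_sqrt (tsum_nonneg fun k => sq_nonneg _), tsum_dco]
  rw [show (fun k => wt n k * ‖hardyCoeff f k‖^2) = fun k => ‖hardyCoeff f k‖^2 + dco n f k by
    funext k; exact wt_split n f k, Summable.tsum_add h1 h2]
  ring

lemma memS_of_summable_wt {n : ℕ} {h : ℂ → ℂ} (hh : AnalyticOnNhd ℂ h (ball (0:ℂ) 1))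
    (hs : Summable (fun k => wt n k * ‖hardyCoeff h k‖^2)) : MemS n h := by
  have hd : Summable (dco n h) := by
    apply Summable.of_nonneg_of_le (fun k => by rw [dco]; positivity) (fun k => ?_) hs
    rw [wt_split]
    nlinarith [sq_nonneg ‖hardyCoeff h k‖]
  constructor
  · refine ⟨hh, ?_⟩
    apply Summable.of_nonneg_of_le (fun k => sq_nonneg _) (fun k => ?_) hs
    rw [wt_split]
    have : 0 ≤ dco n h k := by rw [dco]; positivity
    linarith
  · refine ⟨analyticOnNhd_iteratedDeriv hh n, ?_⟩
    refine (hd.comp_injective (add_inj n)).congr fun k => ?_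
    exact (norm_hc_deriv_sq n h k).symm

lemma sum_reflect' (x y : ℕ → ℝ) (k : ℕ) :
    ∑ i ∈ Finset.range (k+1), x i * y (k-i) = ∑ i ∈ Finset.range (k+1), y i * x (k-i) := by
  rw [← Finset.sum_range_reflect (fun i => y i * x (k - i)) (k+1)]
  refine Finset.sum_congr rfl fun i hi => ?_
  have hik : i ≤ k := Nat.lt_succ_iff.mp (Finset.mem_range.mp hi)
  have h1 : k + 1 - 1 - i = k - i := by omega
  have h2 : k - (k - i) = i := by omega
  rw [h1, h2, mul_comm]

lemma key_estimate {n : ℕ} (hn : 1 ≤ n) {a b c : ℕ → ℝ}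
    (ha0 : ∀ k, 0 ≤ a k) (hb0 : ∀ k, 0 ≤ b k) (hc0 : ∀ k, 0 ≤ c k)
    (hc : ∀ k, c k ≤ ∑ i ∈ Finset.range (k+1), a i * b (k-i))
    (hA : Summable (fun k => wt n k * a k^2)) (hB : Summable (fun k => wt n k * b k^2)) :
    Summable (fun k => wt n k * c k^2) ∧
      ∑' k, wt n k * c k^2 ≤
        (2*(2 * (1 + 2^n * (2*(n:ℝ))^n)) * Real.sqrt (∑' k, (wt n k)⁻¹))^2 *
          ((∑' k, wt n k * a k^2) * (∑' k, wt n k * b k^2)) := by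
  set M : ℝ := 2 * (1 + 2^n * (2*(n:ℝ))^n) with hM
  have hM0 : 0 < M := by positivity
  set S : ℝ := ∑' k, (wt n k)⁻¹ with hS
  have hS0 : 0 ≤ S := tsum_nonneg fun k => inv_nonneg.mpr (wt_nonneg n k)
  set A : ℕ → ℝ := fun k => Real.sqrt (wt n k) * a k with hAdef
  set B : ℕ → ℝ := fun k => Real.sqrt (wt n k) * b k with hBdef
  have hA0 : ∀ k, 0 ≤ A k := fun k => mul_nonneg (Real.sqrt_nonneg _) (ha0 k)
  have hB0 : ∀ k, 0 ≤ B k := fun k => mul_nonneg (Real.sqrt_nonneg _) (hb0 k)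
  have hAsq : ∀ k, A k ^ 2 = wt n k * a k ^ 2 := fun k => by
    rw [hAdef, mul_pow, Real.sq_sqrt (wt_nonneg n k)]
  have hBsq : ∀ k, B k ^ 2 = wt n k * b k ^ 2 := fun k => by
    rw [hBdef, mul_pow, Real.sq_sqrt (wt_nonneg n k)]
  have hA2 : Summable (fun k => A k ^ 2) := hA.congr fun k => (hAsq k).symm
  have hB2 : Summable (fun k => B k ^ 2) := hB.congr fun k => (hBsq k).symm
  have htA : ∑' k, A k ^ 2 = ∑' k, wt n k * a k ^ 2 := tsum_congr hAsq
  have htB : ∑' k, B k ^ 2 = ∑' k, wt n k * b k ^ 2 := tsum_congr hBsq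
  -- ℓ¹ facts
  have hxinv0 : ∀ k, (0:ℝ) ≤ Real.sqrt ((wt n k)⁻¹) := fun k => Real.sqrt_nonneg _
  have hxinv2 : Summable (fun k => Real.sqrt ((wt n k)⁻¹) ^ 2) :=
    (summable_inv_wt n hn).congr fun k =>
      (Real.sq_sqrt (inv_nonneg.mpr (wt_nonneg n k))).symm
  have hxB : ∀ k, Real.sqrt ((wt n k)⁻¹) * B k = b k := fun k => by
    rw [hBdef, Real.sqrt_inv, ← mul_assoc,
      inv_mul_cancel₀ (Real.sqrt_ne_zero'.mpr (wt_pos n k)), one_mul]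
  have hxA : ∀ k, Real.sqrt ((wt n k)⁻¹) * A k = a k := fun k => by
    rw [hAdef, Real.sqrt_inv, ← mul_assoc,
      inv_mul_cancel₀ (Real.sqrt_ne_zero'.mpr (wt_pos n k)), one_mul]
  have hxinvt : ∑' k, Real.sqrt ((wt n k)⁻¹) ^ 2 = S :=
    tsum_congr fun k => Real.sq_sqrt (inv_nonneg.mpr (wt_nonneg n k))
  obtain ⟨hbsum, hble⟩ := cs_tsum hxinv0 hB0 hxinv2 hB2
  obtain ⟨hasum, hale⟩ := cs_tsum hxinv0 hA0 hxinv2 hA2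
  rw [funext hxB] at hbsum
  rw [funext hxA] at hasum
  rw [tsum_congr hxB, hxinvt] at hble
  rw [tsum_congr hxA, hxinvt] at hale
  -- Young estimates
  set P : ℕ → ℝ := fun k => ∑ i ∈ Finset.range (k+1), b i * A (k-i) with hP
  set Q : ℕ → ℝ := fun k => ∑ i ∈ Finset.range (k+1), a i * B (k-i) with hQ
  have hP0 : ∀ k, 0 ≤ P k := fun k =>
    Finset.sum_nonneg fun i _ => mul_nonneg (hb0 i) (hA0 _)
  have hQ0 : ∀ k, 0 ≤ Q k := fun k =>
    Finset.sum_nonneg fun i _ => mul_nonneg (ha0 i) (hB0 _)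
  obtain ⟨hPsum, hPle⟩ := young_l1_l2 hb0 hA0 hbsum hA2
  obtain ⟨hQsum, hQle⟩ := young_l1_l2 ha0 hB0 hasum hB2
  -- pointwise bound
  have hkey : ∀ k, Real.sqrt (wt n k) * c k ≤ M * (P k + Q k) := by
    intro k
    have step1 : Real.sqrt (wt n k) * c k
        ≤ ∑ i ∈ Finset.range (k+1), Real.sqrt (wt n k) * (a i * b (k-i)) := by
      rw [← Finset.mul_sum]
      exact mul_le_mul_of_nonneg_left (hc k) (Real.sqrt_nonneg _)
    have step2 : ∀ i ∈ Finset.range (k+1), Real.sqrt (wt n k) * (a i * b (k-i))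
        ≤ M * ((A i * b (k-i)) + (a i * B (k-i))) := by
      intro i hi
      have hik : i ≤ k := Nat.lt_succ_iff.mp (Finset.mem_range.mp hi)
      have hsw : Real.sqrt (wt n k)
          ≤ M * (Real.sqrt (wt n i) + Real.sqrt (wt n (k-i))) := by
        have := sqrt_wt_add_le n hn i (k-i)
        rwa [Nat.add_sub_cancel' hik] at this
      have hab : (0:ℝ) ≤ a i * b (k-i) := mul_nonneg (ha0 i) (hb0 _)
      calc Real.sqrt (wt n k) * (a i * b (k-i))
          ≤ (M * (Real.sqrt (wt n i) + Real.sqrt (wt n (k-i)))) * (a i * b (k-i)) :=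
            mul_le_mul_of_nonneg_right hsw hab
        _ = M * ((A i * b (k-i)) + (a i * B (k-i))) := by rw [hAdef, hBdef]; ring
    calc Real.sqrt (wt n k) * c k
        ≤ ∑ i ∈ Finset.range (k+1), Real.sqrt (wt n k) * (a i * b (k-i)) := step1
      _ ≤ ∑ i ∈ Finset.range (k+1), M * ((A i * b (k-i)) + (a i * B (k-i))) :=
          Finset.sum_le_sum step2
      _ = M * ((∑ i ∈ Finset.range (k+1), A i * b (k-i)) + ∑ i ∈ Finset.range (k+1), a i * B (k-i)) := by
          rw [← Finset.mul_sum, ← Finset.sum_add_distrib]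
      _ = M * (P k + Q k) := by rw [hP, hQ, sum_reflect' A b k]
  have hpt : ∀ k, wt n k * c k ^ 2 ≤ 2 * M^2 * (P k ^ 2 + Q k ^ 2) := by
    intro k
    have h1 : wt n k * c k ^ 2 = (Real.sqrt (wt n k) * c k) ^ 2 := by
      rw [mul_pow, Real.sq_sqrt (wt_nonneg n k)]
    have h2 : (Real.sqrt (wt n k) * c k) ^ 2 ≤ (M * (P k + Q k)) ^ 2 :=
      pow_le_pow_left₀ (mul_nonneg (Real.sqrt_nonneg _) (hc0 k)) (hkey k) 2
    rw [h1]
    nlinarith [sq_nonneg (P k - Q k), sq_nonneg M, hP0 k, hQ0 k]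
  have hsummable : Summable (fun k => wt n k * c k ^ 2) := by
    apply Summable.of_nonneg_of_le
      (fun k => mul_nonneg (wt_nonneg n k) (sq_nonneg _)) hpt
    exact (hPsum.add hQsum).mul_left _
  refine ⟨hsummable, ?_⟩
  have hbound : ∑' k, wt n k * c k ^ 2 ≤ 2 * M^2 * ((∑' k, P k ^2) + ∑' k, Q k ^2) := by
    calc ∑' k, wt n k * c k ^ 2 ≤ ∑' k, 2 * M^2 * (P k ^ 2 + Q k ^ 2) :=
          Summable.tsum_le_tsum hpt hsummable ((hPsum.add hQsum).mul_left _)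
      _ = 2 * M^2 * ((∑' k, P k ^2) + ∑' k, Q k ^2) := by
          rw [tsum_mul_left, Summable.tsum_add hPsum hQsum]
  have hbsq : (∑' k, b k)^2 ≤ S * ∑' k, B k ^ 2 := by
    have h := pow_le_pow_left₀ (tsum_nonneg hb0) hble 2
    calc (∑' k, b k)^2 ≤ (Real.sqrt S * Real.sqrt (∑' k, B k ^2))^2 := h
      _ = S * ∑' k, B k ^ 2 := by
          rw [mul_pow, Real.sq_sqrt hS0, Real.sq_sqrt (tsum_nonneg fun k => sq_nonneg _)]
  have hasq : (∑' k, a k)^2 ≤ S * ∑' k, A k ^ 2 := by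
    have h := pow_le_pow_left₀ (tsum_nonneg ha0) hale 2
    calc (∑' k, a k)^2 ≤ (Real.sqrt S * Real.sqrt (∑' k, A k ^2))^2 := h
      _ = S * ∑' k, A k ^ 2 := by
          rw [mul_pow, Real.sq_sqrt hS0, Real.sq_sqrt (tsum_nonneg fun k => sq_nonneg _)]
  have hA2nn : (0:ℝ) ≤ ∑' k, A k ^2 := tsum_nonneg fun k => sq_nonneg _
  have hB2nn : (0:ℝ) ≤ ∑' k, B k ^2 := tsum_nonneg fun k => sq_nonneg _
  have hPfin : ∑' k, P k ^ 2 ≤ S * (∑' k, B k ^2) * ∑' k, A k ^2 := by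
    calc ∑' k, P k ^2 ≤ (∑' k, b k)^2 * ∑' k, A k ^2 := hPle
      _ ≤ S * (∑' k, B k ^2) * ∑' k, A k ^2 := mul_le_mul_of_nonneg_right hbsq hA2nn
  have hQfin : ∑' k, Q k ^ 2 ≤ S * (∑' k, A k ^2) * ∑' k, B k ^2 := by
    calc ∑' k, Q k ^2 ≤ (∑' k, a k)^2 * ∑' k, B k ^2 := hQle
      _ ≤ S * (∑' k, A k ^2) * ∑' k, B k ^2 := mul_le_mul_of_nonneg_right hasq hB2nn
  have hfinal : ∑' k, wt n k * c k ^ 2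
      ≤ (2*M*Real.sqrt S)^2 * ((∑' k, A k ^2) * ∑' k, B k ^2) := by
    have : (2*M*Real.sqrt S)^2 = 4 * M^2 * S := by
      rw [mul_pow, mul_pow, Real.sq_sqrt hS0]; ring
    rw [this]
    nlinarith [hbound, hPfin, hQfin]
  rw [← htA, ← htB]
  exact hfinal

end Stmt3Aux

/-- For every `n ≥ 1` there is `C > 0` so that for all `f, g ∈ S_n²`,
`fg ∈ S_n²` and `‖fg‖_{S_n²} ≤ C ‖f‖_{S_n²} ‖g‖_{S_n²}`. -/
theorem stmt3 (n : ℕ) (hn : 1 ≤ n) :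
    ∃ C : ℝ, 0 < C ∧ ∀ f g : ℂ → ℂ, MemS n f → MemS n g →
      MemS n (fun z => f z * g z) ∧
      normS n (fun z => f z * g z) ≤ C * normS n f * normS n g := by
  classical
  open Stmt3Aux Finset in
  set M : ℝ := 2 * (1 + 2^n * (2*(n:ℝ))^n) with hM
  have hM0 : 0 < M := by positivity
  set S : ℝ := ∑' k, (wt n k)⁻¹ with hS
  have hS0 : 0 ≤ S := tsum_nonneg fun k => inv_nonneg.mpr (wt_nonneg n k)
  have hK0 : (0:ℝ) ≤ 2*M*Real.sqrt S := by positivity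
  refine ⟨2*M*Real.sqrt S + 1, by positivity, fun f g hf hg => ?_⟩
  have hc : ∀ k, ‖hardyCoeff (fun z => f z * g z) k‖
      ≤ ∑ i ∈ Finset.range (k+1), ‖hardyCoeff f i‖ * ‖hardyCoeff g (k-i)‖ := by
    intro k
    rw [hardyCoeff_mul hf.1 hg.1]
    exact le_trans (norm_sum_le _ _)
      (le_of_eq (Finset.sum_congr rfl fun i _ => norm_mul _ _))
  obtain ⟨hsumm, hest⟩ := key_estimate hn (fun k => norm_nonneg (hardyCoeff f k))
    (fun k => norm_nonneg (hardyCoeff g k))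
    (fun k => norm_nonneg (hardyCoeff (fun z => f z * g z) k)) hc
    (summable_wt_of_memS hf) (summable_wt_of_memS hg)
  have hmem : MemS n (fun z => f z * g z) := memS_of_summable_wt (hf.1.1.mul hg.1.1) hsumm
  refine ⟨hmem, ?_⟩
  have hFn : 0 ≤ normS n f := by unfold normS; exact Real.sqrt_nonneg _
  have hGn : 0 ≤ normS n g := by unfold normS; exact Real.sqrt_nonneg _
  have hPn : 0 ≤ normS n (fun z => f z * g z) := by unfold normS; exact Real.sqrt_nonneg _
  have h1 : normS n (fun z => f z * g z) ^ 2
      ≤ ((2*M*Real.sqrt S + 1) * normS n f * normS n g) ^ 2 := by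
    rw [normS_sq_eq hmem]
    have hF := normS_sq_eq hf
    have hG := normS_sq_eq hg
    calc ∑' k, wt n k * ‖hardyCoeff (fun z => f z * g z) k‖ ^ 2
        ≤ (2*M*Real.sqrt S)^2 * ((∑' k, wt n k * ‖hardyCoeff f k‖^2)
            * ∑' k, wt n k * ‖hardyCoeff g k‖^2) := hest
      _ = ((2*M*Real.sqrt S) * normS n f * normS n g)^2 := by rw [← hF, ← hG]; ring
      _ ≤ ((2*M*Real.sqrt S + 1) * normS n f * normS n g)^2 := by
          apply pow_le_pow_left₀ (by positivity)
          have : (2*M*Real.sqrt S) ≤ 2*M*Real.sqrt S + 1 := by linarith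
          exact mul_le_mul_of_nonneg_right (mul_le_mul_of_nonneg_right this hFn) hGn
  exact (pow_le_pow_iff_left₀ hPn (by positivity) two_ne_zero).mp h1
end

section
/- Let n ≥ 1 be an integer. For every f ∈ H², one has V_n f ∈ S_n² and ‖V_n f‖_{S_n²} ≤ 2 ‖f‖_{H²}; that is, V_n is a bounded linear operator from (H², ‖·‖_{H²}) into (S_n², ‖·‖_{S_n²}). -/
/-!
Integrating the Taylor series `f(z) = ∑ aₖ zᵏ` termwise against the weight `(1 - t)^(n-1)` and
evaluating the resulting Beta integrals shows that `V_n f = ∑ aₖ k! / (k + n)! z^(k+n)`.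
Hence every Taylor coefficient of `V_n f` is dominated by one of `f`, so `‖V_n f‖ ≤ ‖f‖`, while
differentiating `n` times gives back exactly the coefficients of `f`, so `‖(V_n f)^(n)‖ = ‖f‖`.
Together, `‖V_n f‖_{S_n²} ≤ √2 ‖f‖ ≤ 2 ‖f‖`.
-/

open Metric Filter

open scoped Nat
open FormalMultilinearSeries

lemma eball_one_eq_ball {α : Type*} [PseudoMetricSpace α] (x : α) : eball x 1 = ball x 1 := by
  simpa using eball_coe (x := x) (ε := 1)

lemma hasSum_nat_add_iff_of_eq_zero {α : Type*} [AddCommGroup α] [TopologicalSpace α]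
    [IsTopologicalAddGroup α] {f : ℕ → α} {n : ℕ} (hf : ∀ j < n, f j = 0) {s : α} :
    HasSum (fun k => f (k + n)) s ↔ HasSum f s := by
  simpa [Finset.sum_eq_zero fun j hj => hf j (Finset.mem_range.mp hj)] using
    hasSum_nat_add_iff' (f := f) (g := s) n

lemma hardyCoeff_iteratedDeriv (F : ℂ → ℂ) (n k : ℕ) :
    hardyCoeff (iteratedDeriv n F) k = ((k + n)! / k ! : ℂ) * hardyCoeff F (k + n) := by
  have hk : (k ! : ℂ) ≠ 0 := by exact_mod_cast k.factorial_ne_zero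
  have hkn : ((k + n)! : ℂ) ≠ 0 := by exact_mod_cast (k + n).factorial_ne_zero
  simp only [hardyCoeff, iteratedDeriv_eq_iterate, ← Function.iterate_add_apply]
  field_simp

lemma norm_hardyCoeff_le_normH2 {f : ℂ → ℂ} (hf : Summable fun k => ‖hardyCoeff f k‖ ^ 2)
    (k : ℕ) : ‖hardyCoeff f k‖ ≤ normH2 f :=
  Real.le_sqrt_of_sq_le (hf.le_tsum k fun _ _ => sq_nonneg _)

lemma hasSum_hardyCoeff_mul_pow {f : ℂ → ℂ} (hf : AnalyticOnNhd ℂ f (ball (0 : ℂ) 1)) {z : ℂ}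
    (hz : z ∈ ball (0 : ℂ) 1) : HasSum (fun k => hardyCoeff f k * z ^ k) (f z) := by
  refine (Complex.hasSum_taylorSeries_on_ball hf.differentiableOn hz).congr_fun fun k => ?_
  simp only [hardyCoeff, sub_zero, smul_eq_mul]
  ring

lemma hardyCoeff_eq_of_hasFPowerSeriesAt {F : ℂ → ℂ} {c : ℕ → ℂ}
    (h : HasFPowerSeriesAt F (ofScalars ℂ c) 0) : hardyCoeff F = c := by
  ext k
  have hTaylor := h.analyticAt.hasFPowerSeriesAt
  simpa [hardyCoeff] using congr_arg (coeff · k) (hTaylor.eq_formalMultilinearSeries h)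

lemma hasFPowerSeriesOnBall_ofScalars_of_hasSum {F : ℂ → ℂ} {c : ℕ → ℂ} {M : ℝ}
    (hc : ∀ j, ‖c j‖ ≤ M) (hF : ∀ z ∈ ball (0 : ℂ) 1, HasSum (fun j => c j * z ^ j) (F z)) :
    HasFPowerSeriesOnBall F (ofScalars ℂ c) 0 1 := by
  have hrad : 1 ≤ (ofScalars ℂ c).radius := by
    simpa using (ofScalars ℂ c).le_radius_of_bound M (r := 1) fun j => by simpa using hc j
  have hq := ((ofScalars ℂ c).hasFPowerSeriesOnBall (one_pos.trans_le hrad)).mono one_pos hrad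
  refine hq.congr fun z hz => ?_
  have hs := hq.hasSum hz
  simp only [ofScalars_apply_eq, smul_eq_mul, zero_add] at hs
  rw [eball_one_eq_ball] at hz
  exact hs.unique (by simpa [mul_comm] using hF z hz)

lemma integral_one_sub_pow_mul_pow (m k : ℕ) :
    ∫ t in (0 : ℝ)..1, ((1 - t : ℝ) : ℂ) ^ m * (t : ℂ) ^ k = m ! * k ! / (k + m + 1)! := by
  have hk : (k ! : ℂ) ≠ 0 := by exact_mod_cast k.factorial_ne_zero
  have hprod : ∏ j ∈ Finset.range (m + 1), ((k : ℂ) + 1 + j) = (k + m + 1)! / k ! := by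
    rw [eq_div_iff hk, mul_comm, Nat.add_assoc, ← Nat.factorial_mul_ascFactorial k (m + 1),
      Nat.ascFactorial_eq_prod_range]
    push_cast
    rfl
  have hB := Complex.betaIntegral_eval_nat_add_one_right (u := k + 1) (by simp; positivity) m
  simp only [Complex.betaIntegral, add_sub_cancel_right, Complex.cpow_natCast, hprod] at hB
  calc ∫ t in (0 : ℝ)..1, ((1 - t : ℝ) : ℂ) ^ m * (t : ℂ) ^ k
      = ∫ t in (0 : ℝ)..1, (t : ℂ) ^ k * (1 - (t : ℂ)) ^ m := by
        congr 1 with t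
        push_cast
        ring
    _ = m ! * k ! / (k + m + 1)! := by
        rw [hB]
        field_simp

open intervalIntegral in
lemma hasSum_integral_mul_comp_mul {F : ℂ → ℂ} {a : ℕ → ℂ} {M : ℝ} (ha : ∀ k, ‖a k‖ ≤ M)
    (hF : ∀ z ∈ ball (0 : ℂ) 1, HasSum (fun k => a k * z ^ k) (F z)) {w : ℝ → ℂ}
    (hw : Continuous w) {z : ℂ} (hz : z ∈ ball (0 : ℂ) 1) :
    HasSum (fun k => a k * z ^ k * ∫ t in (0 : ℝ)..1, w t * (t : ℂ) ^ k)
      (∫ t in (0 : ℝ)..1, w t * F (t * z)) := by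
  obtain ⟨C, hC⟩ := (isCompact_uIcc (a := (0 : ℝ)) (b := 1)).exists_bound_of_continuousOn
    hw.continuousOn
  have hz1 : ‖z‖ < 1 := mem_ball_zero_iff.mp hz
  have hgeom := summable_geometric_of_lt_one (norm_nonneg z) hz1
  have htz : ∀ t ∈ Set.uIoc (0 : ℝ) 1, ‖(t : ℂ) * z‖ ≤ ‖z‖ := fun t ht => by
    rw [Set.uIoc_of_le zero_le_one] at ht
    rw [norm_mul, Complex.norm_real, Real.norm_of_nonneg ht.1.le]
    exact mul_le_of_le_one_left (norm_nonneg z) ht.2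
  have key := hasSum_integral_of_dominated_convergence (μ := MeasureTheory.volume)
    (F := fun k t => w t * (a k * ((t : ℂ) * z) ^ k)) (f := fun t => w t * F (t * z))
    (fun k _ => C * (M * ‖z‖ ^ k))
    (fun _ => (by fun_prop : Continuous _).aestronglyMeasurable)
    (fun k => .of_forall fun t ht => by
      rw [norm_mul, norm_mul, norm_pow]
      gcongr
      · exact (norm_nonneg _).trans (hC t (Set.uIoc_subset_uIcc ht))
      · exact hC t (Set.uIoc_subset_uIcc ht)
      · exact (norm_nonneg _).trans (ha k)
      · exact ha k
      · exact htz t ht)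
    (.of_forall fun _ _ => (hgeom.mul_left M).mul_left C)
    intervalIntegrable_const
    (.of_forall fun t ht => (hF _ (mem_ball_zero_iff.mpr ((htz t ht).trans_lt hz1))).mul_left _)
  refine key.congr_fun fun k => ?_
  rw [← integral_const_mul]
  congr 1 with t
  ring

/-- The Taylor coefficients of `V_n f` when those of `f` are `a`. -/
noncomputable def vnCoeff (n : ℕ) (a : ℕ → ℂ) (j : ℕ) : ℂ :=
  if j < n then 0 else a (j - n) * ((j - n)! / j ! : ℂ)

section vnCoeff

variable {n : ℕ} {a : ℕ → ℂ}

lemma vnCoeff_of_lt {j : ℕ} (hj : j < n) : vnCoeff n a j = 0 := if_pos hj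

lemma vnCoeff_add (k : ℕ) : vnCoeff n a (k + n) = a k * (k ! / (k + n)! : ℂ) := by
  simp [vnCoeff]

lemma factorial_div_mul_vnCoeff_add (k : ℕ) :
    ((k + n)! / k ! : ℂ) * vnCoeff n a (k + n) = a k := by
  have hk : (k ! : ℂ) ≠ 0 := by exact_mod_cast k.factorial_ne_zero
  have hkn : ((k + n)! : ℂ) ≠ 0 := by exact_mod_cast (k + n).factorial_ne_zero
  rw [vnCoeff_add]
  field_simp

lemma norm_vnCoeff_add_le (k : ℕ) : ‖vnCoeff n a (k + n)‖ ≤ ‖a k‖ := by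
  rw [vnCoeff_add, norm_mul]
  refine mul_le_of_le_one_right (norm_nonneg _) ?_
  rw [norm_div, Complex.norm_natCast, Complex.norm_natCast,
    div_le_one (by exact_mod_cast (k + n).factorial_pos)]
  exact_mod_cast Nat.factorial_le (Nat.le_add_right k n)

lemma norm_vnCoeff_le (j : ℕ) : ‖vnCoeff n a j‖ ≤ ‖a (j - n)‖ := by
  rcases lt_or_ge j n with hj | hj
  · simp [vnCoeff_of_lt hj]
  · simpa [Nat.sub_add_cancel hj] using norm_vnCoeff_add_le (n := n) (a := a) (j - n)

lemma sq_norm_vnCoeff_add_le (k : ℕ) : ‖vnCoeff n a (k + n)‖ ^ 2 ≤ ‖a k‖ ^ 2 :=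
  pow_le_pow_left₀ (norm_nonneg _) (norm_vnCoeff_add_le k) 2

lemma summable_sq_norm_vnCoeff_add (ha : Summable fun k => ‖a k‖ ^ 2) :
    Summable fun k => ‖vnCoeff n a (k + n)‖ ^ 2 :=
  ha.of_nonneg_of_le (fun _ => sq_nonneg _) sq_norm_vnCoeff_add_le

lemma hasSum_sq_norm_vnCoeff (ha : Summable fun k => ‖a k‖ ^ 2) :
    HasSum (fun j => ‖vnCoeff n a j‖ ^ 2) (∑' k, ‖vnCoeff n a (k + n)‖ ^ 2) :=
  (hasSum_nat_add_iff_of_eq_zero (n := n) fun j hj => by simp [vnCoeff_of_lt hj]).mp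
    (summable_sq_norm_vnCoeff_add ha).hasSum

lemma tsum_sq_norm_vnCoeff_le (ha : Summable fun k => ‖a k‖ ^ 2) :
    ∑' j, ‖vnCoeff n a j‖ ^ 2 ≤ ∑' k, ‖a k‖ ^ 2 := by
  rw [(hasSum_sq_norm_vnCoeff ha).tsum_eq]
  exact (summable_sq_norm_vnCoeff_add ha).tsum_le_tsum sq_norm_vnCoeff_add_le ha

end vnCoeff

lemma hasSum_vnCoeff_mul_pow {n : ℕ} (hn : 1 ≤ n) {f : ℂ → ℂ} {a : ℕ → ℂ} {M : ℝ}
    (ha : ∀ k, ‖a k‖ ≤ M) (hf : ∀ z ∈ ball (0 : ℂ) 1, HasSum (fun k => a k * z ^ k) (f z))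
    {z : ℂ} (hz : z ∈ ball (0 : ℂ) 1) :
    HasSum (fun j => vnCoeff n a j * z ^ j) (Vn n f z) := by
  refine (hasSum_nat_add_iff_of_eq_zero (n := n) fun j hj => by simp [vnCoeff_of_lt hj]).mp ?_
  have hfac : ((n - 1)! : ℂ) ≠ 0 := by exact_mod_cast (n - 1).factorial_ne_zero
  have hkn : ∀ k, ((k + n)! : ℂ) ≠ 0 := fun k => by exact_mod_cast (k + n).factorial_ne_zero
  refine ((hasSum_integral_mul_comp_mul ha hf (w := fun t => ((1 - t : ℝ) : ℂ) ^ (n - 1))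
    (by fun_prop) hz).mul_left (z ^ n / (n - 1)!)).congr_fun fun k => ?_
  rw [integral_one_sub_pow_mul_pow, vnCoeff_add, show k + (n - 1) + 1 = k + n by omega, pow_add]
  field_simp

/-- For `n ≥ 1` and `f ∈ H²`, `V_n f ∈ S_n²` and `‖V_n f‖_{S_n²} ≤ 2‖f‖_{H²}`,
i.e. `V_n` is bounded from `H²` into `S_n²`. -/
theorem stmt10 (n : ℕ) (hn : 1 ≤ n) (f : ℂ → ℂ) (hf : MemH2 f) :
    MemS n (Vn n f) ∧ normS n (Vn n f) ≤ 2 * normH2 f := by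
  obtain ⟨hfA, hfS⟩ := hf
  have ha : ∀ k, ‖hardyCoeff f k‖ ≤ normH2 f := norm_hardyCoeff_le_normH2 hfS
  have hV : HasFPowerSeriesOnBall (Vn n f) (ofScalars ℂ (vnCoeff n (hardyCoeff f))) 0 1 :=
    hasFPowerSeriesOnBall_ofScalars_of_hasSum (fun j => (norm_vnCoeff_le j).trans (ha _))
      fun _ => hasSum_vnCoeff_mul_pow hn ha fun _ => hasSum_hardyCoeff_mul_pow hfA
  have hVcoeff : hardyCoeff (Vn n f) = vnCoeff n (hardyCoeff f) :=
    hardyCoeff_eq_of_hasFPowerSeriesAt hV.hasFPowerSeriesAt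
  have hDcoeff : hardyCoeff (iteratedDeriv n (Vn n f)) = hardyCoeff f := by
    ext k
    rw [hardyCoeff_iteratedDeriv, hVcoeff, factorial_div_mul_vnCoeff_add]
  have hVA : AnalyticOnNhd ℂ (Vn n f) (ball 0 1) := by
    simpa [eball_one_eq_ball] using hV.analyticOnNhd
  have hnorm : normH2 (Vn n f) ≤ normH2 f := by
    rw [normH2, normH2, hVcoeff]
    exact Real.sqrt_le_sqrt (tsum_sq_norm_vnCoeff_le hfS)
  refine ⟨⟨⟨hVA, hVcoeff ▸ (hasSum_sq_norm_vnCoeff hfS).summable⟩,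
    iteratedDeriv_eq_iterate (f := Vn n f) ▸ hVA.iterated_deriv n, hDcoeff ▸ hfS⟩, ?_⟩
  have hnf : 0 ≤ normH2 (Vn n f) := Real.sqrt_nonneg _
  rw [normS, normH2, hDcoeff, ← normH2]
  calc √(normH2 f ^ 2 + normH2 (Vn n f) ^ 2) ≤ √((2 * normH2 f) ^ 2) :=
        Real.sqrt_le_sqrt (by nlinarith)
    _ = 2 * normH2 f := Real.sqrt_sq (by linarith)
end
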